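/- In the qubit family above, the dephasing (pinching) map ℒ in the computational basis preserves the SLD quantum Fisher information: letting σ_θ = ℒ(ρ_θ) = diag(p(θ), 1−p(θ)), the operator L_θ is also the SLD of σ_θ, and tr(L_θ² σ_θ) = tr(L_θ² ρ_θ); yet the RLD Fisher information strictly decreases: tr(σ_θ^{-1} σ̇_θ²) < tr(ρ_θ^{-1} ρ̇_θ* ρ̇_θ) whenever ε ≠ 0 and ṗ(θ) ≠ 0. -/

import Mathlib

open scoped Matrix ComplexOrder

/-- `r(θ) = exp ∫_a^θ ṗ(s)(1−2p(s))/(2p(s)(1−p(s))) ds`, with `p'` the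
derivative of `p`. -/
noncomputable def rFun (a : ℝ) (p p' : ℝ → ℝ) (θ : ℝ) : ℝ :=
  Real.exp (∫ s in a..θ, p' s * (1 - 2 * p s) / (2 * p s * (1 - p s)))

/-- The derivative `ṙ(θ) = r(θ)·ṗ(θ)(1−2p(θ))/(2p(θ)(1−p(θ)))`. -/
noncomputable def rDot (a : ℝ) (p p' : ℝ → ℝ) (θ : ℝ) : ℝ :=
  rFun a p p' θ * (p' θ * (1 - 2 * p θ) / (2 * p θ * (1 - p θ)))

/-- The qubit family `ρ_θ = [[p(θ), ε r(θ)],[ε r(θ), 1−p(θ)]]`. -/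
noncomputable def rhoFam (a : ℝ) (p p' : ℝ → ℝ) (ε : ℝ) (θ : ℝ) :
    Matrix (Fin 2) (Fin 2) ℂ :=
  !![(p θ : ℂ), ((ε * rFun a p p' θ : ℝ) : ℂ);
     ((ε * rFun a p p' θ : ℝ) : ℂ), ((1 - p θ : ℝ) : ℂ)]

/-- The entrywise derivative `ρ̇_θ`. -/
noncomputable def rhoDot (a : ℝ) (p p' : ℝ → ℝ) (ε : ℝ) (θ : ℝ) :
    Matrix (Fin 2) (Fin 2) ℂ :=
  !![(p' θ : ℂ), ((ε * rDot a p p' θ : ℝ) : ℂ);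
     ((ε * rDot a p p' θ : ℝ) : ℂ), ((-p' θ : ℝ) : ℂ)]

/-- The dephased family `σ_θ = ℒ(ρ_θ) = diag(p(θ), 1−p(θ))`. -/
noncomputable def sigmaFam (p : ℝ → ℝ) (θ : ℝ) : Matrix (Fin 2) (Fin 2) ℂ :=
  Matrix.diagonal ![(p θ : ℂ), ((1 - p θ : ℝ) : ℂ)]

/-- Its entrywise derivative `σ̇_θ = diag(ṗ(θ), −ṗ(θ))`. -/
noncomputable def sigmaDot (p' : ℝ → ℝ) (θ : ℝ) : Matrix (Fin 2) (Fin 2) ℂ :=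
  Matrix.diagonal ![(p' θ : ℂ), ((-p' θ : ℝ) : ℂ)]

/-- The diagonal operator `L_θ = diag(ṗ(θ)/p(θ), −ṗ(θ)/(1−p(θ)))`. -/
noncomputable def LFam (p p' : ℝ → ℝ) (θ : ℝ) : Matrix (Fin 2) (Fin 2) ℂ :=
  Matrix.diagonal ![((p' θ / p θ : ℝ) : ℂ), ((-(p' θ / (1 - p θ)) : ℝ) : ℂ)]


/-
Everything in the family is explicit, so each claim reduces to a 2 × 2 computation. The operators
`σ_θ`, `σ̇_θ`, `L_θ` are diagonal, which gives the SLD equation, and since `L_θ²` is diagonal,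
`tr(L_θ² ρ_θ)` only sees the diagonal of `ρ_θ`, i.e. `σ_θ`. For the RLD side, `ρ̇_θ` and `σ̇_θ` are
real, symmetric and traceless, so by Cayley–Hamilton their squares are the scalars
`ṗ² + ε²ṙ²` and `ṗ²`; together with `tr A⁻¹ = tr A / det A` and `tr ρ_θ = tr σ_θ = 1` the two
RLD informations are `(ṗ² + ε²ṙ²) / (p(1-p) - ε²r²)` and `ṗ² / (p(1-p))`, and the first is
strictly larger as soon as `ṗ ≠ 0` and `εr ≠ 0`.
-/

open Matrix Set

namespace Matrix

variable {K : Type*} [Field K]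

theorem trace_inv_fin_two (A : Matrix (Fin 2) (Fin 2) K) : A⁻¹.trace = A.trace / A.det := by
  rw [inv_def, trace_smul, adjugate_fin_two, trace_fin_two_of, trace_fin_two, Ring.inverse_eq_inv',
    smul_eq_mul, add_comm]
  exact inv_mul_eq_div _ _

theorem trace_inv_mul_mul_fin_two_of_mul_eq_smul_one {A M N : Matrix (Fin 2) (Fin 2) K} {c : K}
    (h : M * N = c • 1) : (A⁻¹ * M * N).trace = c * A.trace / A.det := by
  rw [Matrix.mul_assoc, h, Matrix.mul_smul, Matrix.mul_one, trace_smul, trace_inv_fin_two,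
    smul_eq_mul, mul_div_assoc]

theorem mul_self_fin_two_of_traceless_symm {R : Type*} [CommRing R] (d e : R) :
    !![d, e; e, -d] * !![d, e; e, -d] = (d ^ 2 + e ^ 2) • (1 : Matrix (Fin 2) (Fin 2) R) := by
  ext i j
  fin_cases i <;> fin_cases j <;> simp <;> ring

theorem trace_diagonal_mul_diagonal_diag {n R : Type*} [Fintype n] [DecidableEq n] [CommRing R]
    (d : n → R) (A : Matrix n n R) :
    (diagonal d * diagonal A.diag).trace = (diagonal d * A).trace := by
  simp [trace, diagonal_mul]

end Matrix

theorem HasDerivWithinAt.matrix_fin_two {𝕜 F : Type*} [NontriviallyNormedField 𝕜]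
    [NormedAddCommGroup F] [NormedSpace 𝕜 F] {f₀₀ f₀₁ f₁₀ f₁₁ : 𝕜 → F} {g₀₀ g₀₁ g₁₀ g₁₁ : F}
    {s : Set 𝕜} {x : 𝕜} (h₀₀ : HasDerivWithinAt f₀₀ g₀₀ s x) (h₀₁ : HasDerivWithinAt f₀₁ g₀₁ s x)
    (h₁₀ : HasDerivWithinAt f₁₀ g₁₀ s x) (h₁₁ : HasDerivWithinAt f₁₁ g₁₁ s x) (i j : Fin 2) :
    HasDerivWithinAt (fun t => !![f₀₀ t, f₀₁ t; f₁₀ t, f₁₁ t] i j) (!![g₀₀, g₀₁; g₁₀, g₁₁] i j) s x := by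
  fin_cases i <;> fin_cases j <;> simpa

theorem hasDerivWithinAt_integral_Icc {g : ℝ → ℝ} {a b θ : ℝ} (hg : ContinuousOn g (Icc a b))
    (hθ : θ ∈ Icc a b) :
    HasDerivWithinAt (fun t => ∫ s in a..t, g s) (g θ) (Icc a b) θ := by
  have : Fact (θ ∈ Icc a b) := ⟨hθ⟩
  refine intervalIntegral.integral_hasDerivWithinAt_right ?_
    (hg.stronglyMeasurableAtFilter_nhdsWithin measurableSet_Icc θ) (hg θ hθ)
  exact (hg.mono (by simpa [uIcc_of_le hθ.1] using Icc_subset_Icc le_rfl hθ.2)).intervalIntegrable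

section QubitFamily

variable (a : ℝ) (p p' : ℝ → ℝ) (ε θ : ℝ)

theorem rFun_pos : 0 < rFun a p p' θ := Real.exp_pos _

theorem hasDerivWithinAt_rFun {b : ℝ} (hp : ∀ θ ∈ Icc a b, 0 < p θ ∧ p θ < 1)
    (hderiv : ∀ θ ∈ Icc a b, HasDerivWithinAt p (p' θ) (Icc a b) θ)
    (hp'cont : ContinuousOn p' (Icc a b)) (hθ : θ ∈ Icc a b) :
    HasDerivWithinAt (rFun a p p') (rDot a p p' θ) (Icc a b) θ := by
  have hpcont : ContinuousOn p (Icc a b) := fun t ht => (hderiv t ht).continuousWithinAt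
  have hden : ∀ t ∈ Icc a b, 2 * p t * (1 - p t) ≠ 0 := fun t ht => by
    have := hp t ht
    exact mul_ne_zero (by linarith) (by linarith)
  have hcont : ContinuousOn (fun s => p' s * (1 - 2 * p s) / (2 * p s * (1 - p s))) (Icc a b) :=
    (hp'cont.mul (continuousOn_const.sub (continuousOn_const.mul hpcont))).div
      ((continuousOn_const.mul hpcont).mul (continuousOn_const.sub hpcont)) hden
  exact (Real.hasDerivAt_exp _).comp_hasDerivWithinAt θ (hasDerivWithinAt_integral_Icc hcont hθ)

theorem sigmaFam_eq_diagonal_diag : sigmaFam p θ = diagonal (rhoFam a p p' ε θ).diag := by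
  rw [sigmaFam]
  congr 1
  ext i
  fin_cases i <;> simp [rhoFam]

theorem sigmaFam_eq_of : sigmaFam p θ = !![(p θ : ℂ), 0; 0, ((1 - p θ : ℝ) : ℂ)] := by
  rw [sigmaFam, diagonal_fin_two]
  rfl

theorem sigmaDot_eq_of : sigmaDot p' θ = !![(p' θ : ℂ), 0; 0, ((-p' θ : ℝ) : ℂ)] := by
  rw [sigmaDot, diagonal_fin_two]
  rfl

theorem commute_sigmaFam_LFam : Commute (sigmaFam p θ) (LFam p p' θ) :=
  commute_diagonal _ _

theorem sigmaFam_mul_LFam (hp₀ : p θ ≠ 0) (hp₁ : 1 - p θ ≠ 0) :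
    sigmaFam p θ * LFam p p' θ = sigmaDot p' θ := by
  have hp₁' : 1 - (p θ : ℂ) ≠ 0 := by exact_mod_cast hp₁
  rw [sigmaFam, LFam, diagonal_mul_diagonal, sigmaDot]
  congr 1
  ext i
  fin_cases i <;> simp <;> field_simp

theorem trace_sigmaFam : (sigmaFam p θ).trace = 1 := by
  simp [sigmaFam_eq_of]

theorem det_sigmaFam : (sigmaFam p θ).det = ((p θ * (1 - p θ) : ℝ) : ℂ) := by
  simp [sigmaFam_eq_of]

theorem sigmaDot_mul_self : sigmaDot p' θ * sigmaDot p' θ = ((p' θ ^ 2 : ℝ) : ℂ) • 1 := by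
  simpa [sigmaDot_eq_of] using mul_self_fin_two_of_traceless_symm (p' θ : ℂ) 0

theorem trace_rhoFam : (rhoFam a p p' ε θ).trace = 1 := by
  simp [rhoFam]

theorem det_rhoFam :
    (rhoFam a p p' ε θ).det = ((p θ * (1 - p θ) - (ε * rFun a p p' θ) ^ 2 : ℝ) : ℂ) := by
  simp [rhoFam]
  ring

theorem rhoDot_conjTranspose_mul_self :
    (rhoDot a p p' ε θ)ᴴ * rhoDot a p p' ε θ
      = ((p' θ ^ 2 + (ε * rDot a p p' θ) ^ 2 : ℝ) : ℂ) • 1 := by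
  have hsymm : (rhoDot a p p' ε θ)ᴴ = rhoDot a p p' ε θ := by
    ext i j
    fin_cases i <;> fin_cases j <;> simp [rhoDot]
  rw [hsymm]
  simpa [rhoDot] using mul_self_fin_two_of_traceless_symm (p' θ : ℂ) ((ε * rDot a p p' θ : ℝ) : ℂ)

theorem re_trace_rld_sigmaFam_lt_rhoFam (hdet : (ε * rFun a p p' θ) ^ 2 < p θ * (1 - p θ))
    (hp' : p' θ ≠ 0) (hε : ε ≠ 0) :
    ((sigmaFam p θ)⁻¹ * sigmaDot p' θ * sigmaDot p' θ).trace.re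
      < ((rhoFam a p p' ε θ)⁻¹ * (rhoDot a p p' ε θ)ᴴ * rhoDot a p p' ε θ).trace.re := by
  rw [trace_inv_mul_mul_fin_two_of_mul_eq_smul_one (sigmaDot_mul_self p' θ),
    trace_inv_mul_mul_fin_two_of_mul_eq_smul_one (rhoDot_conjTranspose_mul_self a p p' ε θ),
    trace_sigmaFam, det_sigmaFam, trace_rhoFam, det_rhoFam, mul_one, mul_one,
    ← Complex.ofReal_div, ← Complex.ofReal_div, Complex.ofReal_re, Complex.ofReal_re]
  have hεr : 0 < (ε * rFun a p p' θ) ^ 2 := by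
    have := rFun_pos a p p' θ
    positivity
  exact div_lt_div₀' (le_add_of_nonneg_right (sq_nonneg _)) (sub_lt_self _ hεr)
    (by positivity) (sub_pos.mpr hdet)

end QubitFamily

theorem stmt14_general (a b : ℝ) (p p' : ℝ → ℝ) (ε : ℝ)
    (hp : ∀ θ ∈ Set.Icc a b, 0 < p θ ∧ p θ < 1)
    (hderiv : ∀ θ ∈ Set.Icc a b, HasDerivWithinAt p (p' θ) (Set.Icc a b) θ)
    (hp'cont : ContinuousOn p' (Set.Icc a b))
    (hp'ne : ∀ θ ∈ Set.Icc a b, p' θ ≠ 0)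
    (hε : ε ≠ 0)
    (hεlt : ∀ θ ∈ Set.Icc a b, ε ^ 2 < p θ * (1 - p θ) / (rFun a p p' θ) ^ 2) :
    ∀ θ ∈ Set.Icc a b,
      (∀ i j, HasDerivWithinAt (fun t => rhoFam a p p' ε t i j)
        (rhoDot a p p' ε θ i j) (Set.Icc a b) θ) ∧
      (∀ i j, HasDerivWithinAt (fun t => sigmaFam p t i j)
        (sigmaDot p' θ i j) (Set.Icc a b) θ) ∧
      sigmaDot p' θ =
        (1 / 2 : ℂ) • (sigmaFam p θ * LFam p p' θ + LFam p p' θ * sigmaFam p θ) ∧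
      Matrix.trace (LFam p p' θ * LFam p p' θ * sigmaFam p θ)
        = Matrix.trace (LFam p p' θ * LFam p p' θ * rhoFam a p p' ε θ) ∧
      (Matrix.trace ((sigmaFam p θ)⁻¹ * sigmaDot p' θ * sigmaDot p' θ)).re
        < (Matrix.trace ((rhoFam a p p' ε θ)⁻¹
            * (rhoDot a p p' ε θ)ᴴ * rhoDot a p p' ε θ)).re := by
  intro θ hθ
  obtain ⟨hp₀, hp₁⟩ := hp θ hθ
  have hdp : HasDerivWithinAt (fun t => (p t : ℂ)) (p' θ : ℂ) (Icc a b) θ :=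
    (hderiv θ hθ).ofReal_comp
  have hdq : HasDerivWithinAt (fun t => ((1 - p t : ℝ) : ℂ)) ((-p' θ : ℝ) : ℂ) (Icc a b) θ :=
    ((hderiv θ hθ).const_sub 1).ofReal_comp
  have hdr : HasDerivWithinAt (fun t => ((ε * rFun a p p' t : ℝ) : ℂ))
      ((ε * rDot a p p' θ : ℝ) : ℂ) (Icc a b) θ :=
    ((hasDerivWithinAt_rFun a p p' θ hp hderiv hp'cont hθ).const_mul ε).ofReal_comp
  have hdet : (ε * rFun a p p' θ) ^ 2 < p θ * (1 - p θ) := by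
    have := hεlt θ hθ
    rwa [lt_div_iff₀ (pow_pos (rFun_pos a p p' θ) 2), ← mul_pow] at this
  refine ⟨hdp.matrix_fin_two hdr hdr hdq, ?_, ?_, ?_,
    re_trace_rld_sigmaFam_lt_rhoFam a p p' ε θ hdet (hp'ne θ hθ) hε⟩
  · simp only [sigmaFam_eq_of, sigmaDot_eq_of]
    exact hdp.matrix_fin_two (hasDerivWithinAt_const _ _ _) (hasDerivWithinAt_const _ _ _) hdq
  · rw [(commute_sigmaFam_LFam p p' θ).symm.eq, sigmaFam_mul_LFam p p' θ hp₀.ne' (sub_pos.mpr hp₁).ne']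
    module
  · rw [sigmaFam_eq_diagonal_diag a p p' ε θ, LFam, diagonal_mul_diagonal,
      trace_diagonal_mul_diagonal_diag]

/-- in the qubit family above (with `ε ≠ 0`), the dephasing map
`ℒ` in the computational basis preserves the SLD quantum Fisher information:
`σ_θ = ℒ(ρ_θ)` has entrywise derivative `σ̇_θ`, `L_θ` is also the SLD of `σ_θ`,
and `tr(L_θ² σ_θ) = tr(L_θ² ρ_θ)`; yet the RLD Fisher information strictly
decreases: `tr(σ_θ⁻¹ σ̇_θ²) < tr(ρ_θ⁻¹ ρ̇_θᴴ ρ̇_θ)`. -/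
theorem stmt14 (a b : ℝ) (hab : a < b) (p p' : ℝ → ℝ) (ε : ℝ)
    (hp : ∀ θ ∈ Set.Icc a b, 0 < p θ ∧ p θ < 1)
    (hderiv : ∀ θ ∈ Set.Icc a b, HasDerivWithinAt p (p' θ) (Set.Icc a b) θ)
    (hp'cont : ContinuousOn p' (Set.Icc a b))
    (hp'ne : ∀ θ ∈ Set.Icc a b, p' θ ≠ 0)
    (hε : ε ≠ 0)
    (hεlt : ∀ θ ∈ Set.Icc a b, ε ^ 2 < p θ * (1 - p θ) / (rFun a p p' θ) ^ 2) :
    ∀ θ ∈ Set.Icc a b,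
      (∀ i j, HasDerivWithinAt (fun t => rhoFam a p p' ε t i j)
        (rhoDot a p p' ε θ i j) (Set.Icc a b) θ) ∧
      (∀ i j, HasDerivWithinAt (fun t => sigmaFam p t i j)
        (sigmaDot p' θ i j) (Set.Icc a b) θ) ∧
      sigmaDot p' θ =
        (1 / 2 : ℂ) • (sigmaFam p θ * LFam p p' θ + LFam p p' θ * sigmaFam p θ) ∧
      Matrix.trace (LFam p p' θ * LFam p p' θ * sigmaFam p θ)
        = Matrix.trace (LFam p p' θ * LFam p p' θ * rhoFam a p p' ε θ) ∧
      (Matrix.trace ((sigmaFam p θ)⁻¹ * sigmaDot p' θ * sigmaDot p' θ)).re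
        < (Matrix.trace ((rhoFam a p p' ε θ)⁻¹
            * (rhoDot a p p' ε θ)ᴴ * rhoDot a p p' ε θ)).re :=
  stmt14_general a b p p' ε hp hderiv hp'cont hp'ne hε hεlt
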